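/- arXiv:1909.10835 — 4 statements merged into one kernel-verified Lean document; each statement's English description precedes it below -/
import Mathlib

section
/- If f : X → Y is a Σ⁰_{1+α}-measurable function between Polish spaces and A ∈ Σ⁰_{1+β}(Y), then f⁻¹(A) ∈ Σ⁰_{1+α+β}(X). -/
open Ordinal Set

/-- The additive Borel class `Σ⁰_α` in a topological space:
`Σ⁰_0 = ∅`; for `α ≥ 1`, a set is in `Σ⁰_α` iff it is open or a countable union of
complements of sets in lower classes. -/
def Sigma0 (X : Type) [TopologicalSpace X] (α : Ordinal.{0}) : Set (Set X) :=
  if α = 0 then ∅ else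
    {A | IsOpen A ∨ ∃ (f : ℕ → Set X) (g : ℕ → {β : Ordinal // β < α}),
        (∀ n, (f n)ᶜ ∈ Sigma0 X (g n).1) ∧ A = ⋃ n, f n}
  termination_by α
  decreasing_by exact (g n).2

/-- `f : X → Y` is `Σ⁰_γ`-measurable: preimages of open sets are `Σ⁰_γ`. -/
def SigmaMeasurable (X Y : Type) [TopologicalSpace X] [TopologicalSpace Y]
    (γ : Ordinal.{0}) (f : X → Y) : Prop :=
  ∀ U : Set Y, IsOpen U → f ⁻¹' U ∈ Sigma0 X γ

lemma sigma0_mono (X : Type) [TopologicalSpace X] {γ δ : Ordinal.{0}} (hγ : γ ≠ 0)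
    (hδ : δ ≠ 0) (h : γ ≤ δ) : Sigma0 X γ ⊆ Sigma0 X δ := by
  intro A hA
  rw [Sigma0, if_neg hγ] at hA
  rw [Sigma0, if_neg hδ]
  rcases hA with h1 | ⟨u, g, hg, rfl⟩
  · exact Or.inl h1
  · exact Or.inr ⟨u, fun n => ⟨(g n).1, lt_of_lt_of_le (g n).2 h⟩, hg, rfl⟩

/-- If `f : X → Y` is a `Σ⁰_{1+α}`-measurable function between Polish spaces and
`A ∈ Σ⁰_{1+β}(Y)`, then `f⁻¹(A) ∈ Σ⁰_{1+α+β}(X)`. -/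
theorem preimage_sigma0_of_sigmaMeasurable
    (X Y : Type) [TopologicalSpace X] [PolishSpace X]
    [TopologicalSpace Y] [PolishSpace Y]
    (α β : Ordinal.{0}) (hα : α < Ordinal.omega 1) (hβ : β < Ordinal.omega 1)
    (f : X → Y) (hf : SigmaMeasurable X Y (1 + α) f)
    (A : Set Y) (hA : A ∈ Sigma0 Y (1 + β)) :
    f ⁻¹' A ∈ Sigma0 X (1 + α + β) := by
  clear hα hβ
  have hone : ∀ δ : Ordinal.{0}, (1 : Ordinal) + δ ≠ 0 := fun δ =>
    (lt_of_lt_of_le zero_lt_one (le_self_add : (1 : Ordinal) ≤ 1 + δ)).ne'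
  induction β using Ordinal.induction generalizing A with
  | h β IH =>
    rw [Sigma0, if_neg (hone β)] at hA
    rcases hA with hop | ⟨u, g, hg, rfl⟩
    · have hne3 : 1 + α + β ≠ 0 :=
        (lt_of_lt_of_le zero_lt_one ((le_self_add : (1 : Ordinal) ≤ 1 + α).trans (le_self_add : 1 + α ≤ 1 + α + β))).ne'
      exact sigma0_mono X (hone α) hne3 (le_self_add : 1 + α ≤ 1 + α + β) (hf A hop)
    · have hne3 : 1 + α + β ≠ 0 :=
        (lt_of_lt_of_le zero_lt_one ((le_self_add : (1 : Ordinal) ≤ 1 + α).trans (le_self_add : 1 + α ≤ 1 + α + β))).ne'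
      rw [preimage_iUnion]
      rw [Sigma0, if_neg hne3]
      refine Or.inr ⟨fun n => f ⁻¹' u n, fun n => ⟨1 + α + ((g n).1 - 1), ?_⟩, fun n => ?_, rfl⟩
      · have hg0 : (g n).1 ≠ 0 := by
          intro h0
          have := hg n
          rw [h0, Sigma0, if_pos rfl] at this
          exact this
        have h1 : (1 : Ordinal) + ((g n).1 - 1) = (g n).1 :=
          Ordinal.add_sub_cancel_of_le (Ordinal.one_le_iff_ne_zero.mpr hg0)
        have hlt : (g n).1 - 1 < β := by
          have := (g n).2
          rw [← h1] at this
          exact (add_lt_add_iff_left 1).mp this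
        exact (add_lt_add_iff_left (1 + α)).mpr hlt
      · have hg0 : (g n).1 ≠ 0 := by
          intro h0
          have := hg n
          rw [h0, Sigma0, if_pos rfl] at this
          exact this
        have h1 : (1 : Ordinal) + ((g n).1 - 1) = (g n).1 :=
          Ordinal.add_sub_cancel_of_le (Ordinal.one_le_iff_ne_zero.mpr hg0)
        have hlt : (g n).1 - 1 < β := by
          have := (g n).2
          rw [← h1] at this
          exact (add_lt_add_iff_left 1).mp this
        have := IH _ hlt ((u n)ᶜ) (by rw [h1]; exact hg n)
        rwa [Set.preimage_compl] at this
end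

section
/- The quotient partial order of Δ⁰_{1+ξ}-measurable Q-valued functions on Baire space under Δ⁰_{1+ξ}-reducibility is isomorphic to the quotient of the domination quasi-order on nonempty countable subsets of Q, via the map A ↦ A(𝒩). -/
open Ordinal Set

/-- The ambiguous Borel class `Δ⁰_α`. -/
def Delta0 (X : Type) [TopologicalSpace X] (α : Ordinal.{0}) : Set (Set X) :=
  {A | A ∈ Sigma0 X α ∧ Aᶜ ∈ Sigma0 X α}

/-- Baire space `ℕ^ℕ`. -/
abbrev Baire : Type := ℕ → ℕ

/-- `A : 𝒩 → Q` is `Δ⁰_θ`-measurable: fibers are `Δ⁰_θ` (by Fact 2.1 such Borel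
`Q`-partitions have countable image, which we record as a hypothesis). -/
def Delta0Measurable {Q : Type*} (θ : Ordinal.{0}) (A : Baire → Q) : Prop :=
  ∀ q : Q, A ⁻¹' {q} ∈ Delta0 Baire θ

/-- `Δ⁰_θ`-reducibility of `Q`-valued functions on Baire space. -/
def DeltaRed {Q : Type*} (le : Q → Q → Prop) (θ : Ordinal.{0})
    (A B : Baire → Q) : Prop :=
  ∃ f : Baire → Baire, (∀ S ∈ Delta0 Baire θ, f ⁻¹' S ∈ Delta0 Baire θ) ∧
    ∀ x, le (A x) (B (f x))

/- ### Auxiliary lemmas -/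

lemma open_mem_Sigma0 {X : Type} [TopologicalSpace X] {α : Ordinal.{0}} (hα : α ≠ 0)
    {U : Set X} (hU : IsOpen U) : U ∈ Sigma0 X α := by
  rw [Sigma0, if_neg hα]; exact Or.inl hU

lemma Sigma0_one {X : Type} [TopologicalSpace X] {A : Set X}
    (h : A ∈ Sigma0 X 1) : IsOpen A := by
  rw [Sigma0, if_neg one_ne_zero] at h
  rcases h with h | ⟨f, g, hfg, rfl⟩
  · exact h
  · exfalso
    have h0 : (g 0).1 = 0 := Ordinal.lt_one_iff_zero.1 (g 0).2
    have := hfg 0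
    rw [h0, Sigma0, if_pos rfl] at this
    exact this

/-- The set of cylinders in Baire space is countable. -/
lemma countable_cylinders :
    {s : Set Baire | ∃ (x : Baire) (n : ℕ), s = PiNat.cylinder x n}.Countable := by
  have : {s : Set Baire | ∃ (x : Baire) (n : ℕ), s = PiNat.cylinder x n} ⊆
      Set.range (fun l : List ℕ => PiNat.cylinder (fun i => l.getD i 0) l.length) := by
    rintro s ⟨x, n, rfl⟩
    refine ⟨List.ofFn (fun i : Fin n => x i), ?_⟩
    have hlen : (List.ofFn (fun i : Fin n => x i)).length = n := List.length_ofFn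
    ext y
    simp only [PiNat.mem_cylinder_iff, hlen]
    constructor
    · intro h i hi
      rw [h i hi, List.getD_eq_getElem _ _ (by simpa [hlen] using hi)]
      simp
    · intro h i hi
      rw [h i hi, List.getD_eq_getElem _ _ (by simpa [hlen] using hi)]
      simp
  exact (Set.countable_range _).mono this

lemma isClosed_cylinder (x : Baire) (n : ℕ) : IsClosed (PiNat.cylinder x n) := by
  rw [PiNat.cylinder_eq_pi]
  exact isClosed_set_pi fun i _ => isClosed_discrete _

/-- Key: in Baire space, a countable union of `Σ⁰_α` sets is `Σ⁰_α` (`α ≠ 0`). -/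
lemma iUnion_mem_Sigma0 {α : Ordinal.{0}} (hα : α ≠ 0) (f : ℕ → Set Baire)
    (hf : ∀ n, f n ∈ Sigma0 Baire α) : (⋃ n, f n) ∈ Sigma0 Baire α := by
  rcases eq_or_ne α 1 with rfl | hα1
  · exact open_mem_Sigma0 one_ne_zero (isOpen_iUnion fun n => Sigma0_one (hf n))
  have h1α : (1 : Ordinal) < α :=
    lt_of_le_of_ne (Ordinal.one_le_iff_ne_zero.2 hα) (Ne.symm hα1)
  -- every Σ⁰_α set can be written as a union of sets with complements in lower classes
  have key : ∀ A ∈ Sigma0 Baire α, ∃ (g : ℕ → Set Baire) (h : ℕ → {β : Ordinal // β < α}),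
      (∀ m, (g m)ᶜ ∈ Sigma0 Baire (h m).1) ∧ A = ⋃ m, g m := by
    intro A hA
    rw [Sigma0, if_neg hα] at hA
    rcases hA with hA | hA
    · -- open set: a countable union of cylinders
      obtain ⟨S, hSb, rfl⟩ :=
        (PiNat.isTopologicalBasis_cylinders (fun _ : ℕ => ℕ)).open_eq_sUnion hA
      rcases S.eq_empty_or_nonempty with rfl | hSne
      · refine ⟨fun _ => ∅, fun _ => ⟨1, h1α⟩, fun m => ?_, by simp⟩
        rw [compl_empty]
        exact open_mem_Sigma0 one_ne_zero isOpen_univ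
      · obtain ⟨e, rfl⟩ := (countable_cylinders.mono hSb).exists_eq_range hSne
        refine ⟨e, fun _ => ⟨1, h1α⟩, fun m => ?_, (Set.sUnion_range e).symm⟩
        obtain ⟨x, n, hx⟩ := hSb ⟨m, rfl⟩
        rw [hx]
        exact open_mem_Sigma0 one_ne_zero (isClosed_cylinder x n).isOpen_compl
    · exact hA
  choose g h hg hunion using key
  let d : ℕ ≃ ℕ × ℕ := (Denumerable.eqv (ℕ × ℕ)).symm
  refine ?_
  rw [Sigma0, if_neg hα]
  refine Or.inr ⟨fun k => g (f ((d k).1)) (hf _) ((d k).2),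
    fun k => h (f ((d k).1)) (hf _) ((d k).2), fun k => hg _ _ _, ?_⟩
  ext x
  simp only [Set.mem_iUnion]
  constructor
  · rintro ⟨n, hx⟩
    rw [hunion (f n) (hf n)] at hx
    obtain ⟨m, hm⟩ := Set.mem_iUnion.1 hx
    refine ⟨d.symm (n, m), ?_⟩
    have hd : d (d.symm (n, m)) = (n, m) := d.apply_symm_apply _
    rw [hd]
    exact hm
  · rintro ⟨k, hk⟩
    refine ⟨(d k).1, ?_⟩
    rw [hunion (f (d k).1) (hf _)]
    exact Set.mem_iUnion.2 ⟨(d k).2, hk⟩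

/-- Preimage of any set under a countable-range `Δ⁰_α`-measurable map is `Σ⁰_α`. -/
lemma preimage_mem_Sigma0 {Q : Type*} {α : Ordinal.{0}} (hα : α ≠ 0) {A : Baire → Q}
    (hA : Delta0Measurable α A) (hc : (Set.range A).Countable) (T : Set Q) :
    A ⁻¹' T ∈ Sigma0 Baire α := by
  rcases (T ∩ Set.range A).eq_empty_or_nonempty with he | hne
  · have : A ⁻¹' T = ∅ := by
      ext x
      simp only [mem_preimage, mem_empty_iff_false, iff_false]
      intro hx
      have : A x ∈ T ∩ Set.range A := ⟨hx, x, rfl⟩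
      rw [he] at this
      exact this
    rw [this]
    exact open_mem_Sigma0 hα isOpen_empty
  · obtain ⟨e, he⟩ := (hc.mono Set.inter_subset_right).exists_eq_range hne
    have : A ⁻¹' T = ⋃ n, A ⁻¹' {e n} := by
      ext x
      simp only [mem_preimage, Set.mem_iUnion, mem_singleton_iff]
      constructor
      · intro hx
        have : A x ∈ T ∩ Set.range A := ⟨hx, x, rfl⟩
        rw [he] at this
        obtain ⟨n, hn⟩ := this
        exact ⟨n, hn.symm⟩
      · rintro ⟨n, hn⟩
        have : e n ∈ T ∩ Set.range A := he ▸ ⟨n, rfl⟩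
        rw [hn]; exact this.1
    rw [this]
    exact iUnion_mem_Sigma0 hα _ fun n => (hA (e n)).1

/-- The quotient poset of `Δ⁰_{1+ξ}`-measurable `Q`-valued functions on Baire space
under `Δ⁰_{1+ξ}`-reducibility is isomorphic, via `A ↦ A(𝒩)`, to the quotient of the
domination quasi-order on nonempty countable subsets of `Q`:
the map preserves and reflects the order, and every nonempty countable subset of `Q`
is the range of some `Δ⁰_{1+ξ}`-measurable function. -/
theorem degrees_iso_domination {Q : Type*} (le : Q → Q → Prop)
    (hrefl : ∀ q, le q q) (htrans : ∀ a b c, le a b → le b c → le a c)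
    (ξ : Ordinal.{0}) :
    (∀ A B : Baire → Q,
      Delta0Measurable (1 + ξ) A → (Set.range A).Countable →
      Delta0Measurable (1 + ξ) B → (Set.range B).Countable →
      (DeltaRed le (1 + ξ) A B ↔ ∀ s ∈ Set.range A, ∃ r ∈ Set.range B, le s r)) ∧
    (∀ S : Set Q, S.Nonempty → S.Countable →
      ∃ A : Baire → Q, Delta0Measurable (1 + ξ) A ∧ Set.range A = S) := by
  classical
  have hθ : (1 : Ordinal) + ξ ≠ 0 := by
    intro h
    have : (1 : Ordinal) ≤ 1 + ξ := le_add_right (le_refl 1)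
    rw [h] at this
    exact absurd this (by simp)
  constructor
  · intro A B hA hAc hB hBc
    constructor
    · rintro ⟨f, hf, hle⟩ s ⟨x, rfl⟩
      exact ⟨B (f x), mem_range_self _, hle x⟩
    · intro hdom
      set g : Q → Baire := fun q =>
        if h : ∃ y : Baire, le q (B y) then h.choose else fun _ => 0 with hg
      refine ⟨g ∘ A, ?_, ?_⟩
      · intro S _
        have h1 : (g ∘ A) ⁻¹' S = A ⁻¹' (g ⁻¹' S) := rfl
        have h2 : ((g ∘ A) ⁻¹' S)ᶜ = A ⁻¹' ((g ⁻¹' S)ᶜ) := by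
          rw [h1, ← Set.preimage_compl]
        exact ⟨h1 ▸ preimage_mem_Sigma0 hθ hA hAc _,
          h2 ▸ preimage_mem_Sigma0 hθ hA hAc _⟩
      · intro x
        obtain ⟨r, ⟨y, rfl⟩, hlr⟩ := hdom (A x) ⟨x, rfl⟩
        have h : ∃ y : Baire, le (A x) (B y) := ⟨y, hlr⟩
        have : g (A x) = h.choose := by rw [hg]; exact dif_pos h
        show le (A x) (B (g (A x)))
        rw [this]
        exact h.choose_spec
  · intro S hne hSc
    obtain ⟨e, he⟩ := hSc.exists_eq_range hne
    refine ⟨fun x => e (x 0), ?_, ?_⟩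
    · intro q
      have hopen : ∀ T : Set ℕ, IsOpen ((fun x : Baire => x 0) ⁻¹' T) := fun T =>
        (isOpen_discrete T).preimage (continuous_apply 0)
      refine ⟨open_mem_Sigma0 hθ (hopen (e ⁻¹' {q})), ?_⟩
      rw [show ((fun x : Baire => e (x 0)) ⁻¹' {q})ᶜ
          = (fun x : Baire => x 0) ⁻¹' (e ⁻¹' {q})ᶜ from rfl]
      exact open_mem_Sigma0 hθ (hopen _)
    · rw [he]
      ext q
      constructor
      · rintro ⟨x, rfl⟩; exact ⟨x 0, rfl⟩
      · rintro ⟨n, rfl⟩; exact ⟨fun _ => n, rfl⟩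
end

section
/- In the term structure 𝒯^⊔ with the inductively defined quasi-order ≤_h, for singleton terms A, C and forest terms B = ⊔_i B_i, D: the relation ⊔_i B_i ≤_h C·D holds iff B_i ≤_h C·D for all i, and A·B ≤_h ⊔_i D_i holds iff A·B ≤_h D_i for some i; these clauses together with the clause for A·B ≤_h C·D (either A ≤_h C and B ≤_h C·D, or A·B ≤_h D) define a transitive relation. -/
/-- Tree terms over a quasi-order `Q`: a tree term `A·B` consists of a singleton
(a constant `q ∈ Q`) together with a countable, possibly empty, forest of tree
terms (encoded as an `Option`-valued family). -/
inductive TTerm (Q : Type*) where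
  | dot : Q → (ℕ → Option (TTerm Q)) → TTerm Q

/-- The inductively defined quasi-order `≤_h` on tree terms:
`A·B ≤_h C·D` iff either (`A ≤_Q C` and every tree of `B` is `≤_h C·D`),
or `A·B ≤_h d` for some tree `d` of `D`. -/
inductive TLe {Q : Type*} (le : Q → Q → Prop) : TTerm Q → TTerm Q → Prop where
  | left {a c : Q} {B D : ℕ → Option (TTerm Q)} :
      le a c → (∀ i b, B i = some b → TLe le b (.dot c D)) →
      TLe le (.dot a B) (.dot c D)
  | right {a c : Q} {B D : ℕ → Option (TTerm Q)} {i : ℕ} {d : TTerm Q} :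
      D i = some d → TLe le (.dot a B) d → TLe le (.dot a B) (.dot c D)

/-- Forest `≤_h` tree: every tree of the forest is below the tree. -/
def FLeT {Q : Type*} (le : Q → Q → Prop) (B : ℕ → Option (TTerm Q))
    (T : TTerm Q) : Prop :=
  ∀ i b, B i = some b → TLe le b T

/-- Tree `≤_h` forest: the tree is below some tree of the forest. -/
def TLeF {Q : Type*} (le : Q → Q → Prop) (T : TTerm Q)
    (D : ℕ → Option (TTerm Q)) : Prop :=
  ∃ i d, D i = some d ∧ TLe le T d

/-- The defining clauses of `≤_h` on the term structure `𝒯^⊔`: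
`⊔_i B_i ≤_h C·D` iff `B_i ≤_h C·D` for all `i`; `A·B ≤_h ⊔_i D_i` iff
`A·B ≤_h D_i` for some `i`; `A·B ≤_h C·D` iff (`A ≤_h C` and `B ≤_h C·D`) or
`A·B ≤_h D`; and these clauses define a transitive relation. -/
theorem tle_clauses_and_transitive {Q : Type*} (le : Q → Q → Prop)
    (hrefl : ∀ q, le q q) (htrans : ∀ a b c, le a b → le b c → le a c) :
    (∀ (B : ℕ → Option (TTerm Q)) (c : Q) (D : ℕ → Option (TTerm Q)),
      FLeT le B (.dot c D) ↔ ∀ i b, B i = some b → TLe le b (.dot c D)) ∧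
    (∀ (a : Q) (B D : ℕ → Option (TTerm Q)),
      TLeF le (.dot a B) D ↔ ∃ i d, D i = some d ∧ TLe le (.dot a B) d) ∧
    (∀ (a c : Q) (B D : ℕ → Option (TTerm Q)),
      TLe le (.dot a B) (.dot c D) ↔
        ((le a c ∧ FLeT le B (.dot c D)) ∨ TLeF le (.dot a B) D)) ∧
    Transitive (TLe le) := by
  refine ⟨fun B c D => Iff.rfl, fun a B D => Iff.rfl, ?_, ?_⟩
  · intro a c B D
    constructor
    · intro h
      cases h with
      | left hac hB => exact Or.inl ⟨hac, hB⟩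
      | right hd h' => exact Or.inr ⟨_, _, hd, h'⟩
    · rintro (⟨hac, hB⟩ | ⟨i, d, hd, h'⟩)
      · exact TLe.left hac hB
      · exact TLe.right hd h'
  · have key : ∀ {U V : TTerm Q}, TLe le U V →
        ∀ T : TTerm Q, TLe le T U → TLe le T V := by
      intro U V h2
      induction h2 with
      | right hF h2' ih =>
        intro T h1
        obtain ⟨a, B⟩ := T
        exact TLe.right hF (ih _ h1)
      | @left c e D F hce hD ihD =>
        intro T h1
        generalize hU : TTerm.dot c D = U at h1
        induction h1 with
        | @left a c' B D' hac hB ihB =>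
          cases hU
          exact TLe.left (htrans _ _ _ hac hce) (fun i b hb => ihB i b hb rfl)
        | @right a c' B D' i d hd h1' _ =>
          cases hU
          exact ihD _ _ hd _ h1'
    exact fun T U V h1 h2 => key h2 T h1
end

section
/- The retraction map r_α on iterated Q-labeled forests, defined by r_α(q) = q, r_α(⊔_i F_i) = ⊔_i r_α(F_i), r_α(T·V) = r_α(T) ⊔ r_α(V), and r_α(s_β(T)) = r_α(T) if β < α, = T if β = α, = s_β(T) if β > α, is an endomorphism of the homomorphism quasi-order: T ≤_h S implies r_α(T) ≤_h r_α(S). -/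
/-! Induction on the derivation of `T ≤_h S`. Since `r_α` commutes with `⊔` and turns a tree
`A·B` into the forest `r_α(A) ⊔ r_α(B)`, every tree rule becomes a forest rule. For a rule on
`s_β`-terms, comparing `β` with `α` shows that each side is unwrapped and retracted (`β < α`),
unwrapped (`β = α`) or left alone (`β > α`), and in each case what remains is the premise of
the rule, its induction hypothesis, or the same rule again. -/

open Ordinal

/-- Terms of the iterated `Q`-labeled forest structure `𝒯^⊔_{ω₁}(Q)`:
constants `q ∈ Q`, singleton terms `s_α(T)`, tree terms `A·B` (singleton `·` forest),
and forest terms `⊔_i T_i` (countable disjoint unions, encoded as `ℕ`-indexed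
families). -/
inductive ITerm (Q : Type) : Type 1 where
  | const : Q → ITerm Q
  | s : Ordinal.{0} → ITerm Q → ITerm Q
  | dot : ITerm Q → (ℕ → ITerm Q) → ITerm Q
  | sup : (ℕ → ITerm Q) → ITerm Q

/-- Singleton terms: constants and `s_α`-terms. -/
def ITerm.IsSng {Q : Type} : ITerm Q → Prop
  | .const _ => True
  | .s _ _ => True
  | _ => False

/-- The homomorphism quasi-order `≤_h` on iterated terms, defined recursively by:
`q ≤_h q'` iff `q ≤_Q q'`; `p ≡_h s_α(p)` for `p ∈ Q`;
`s_α(U) ≤_h s_β(V)` iff `U ≤_h V` (`α = β`), iff `s_α(U) ≤_h V` (`α > β`),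
iff `U ≤_h s_β(V)` (`α < β`); `A·B ≤_h C·D` iff (`A ≤_h C` and `B ≤_h C·D`) or
`A·B ≤_h D_i` for some `i`; `⊔_i B_i ≤_h T` iff all `B_i ≤_h T`; a non-forest term
is `≤_h ⊔_i D_i` iff it is `≤_h D_i` for some `i`; a tree `A·B` is below a
singleton `S` iff `A` and all trees of `B` are; a singleton `S ≤_h C·D` iff
`S ≤_h C` or `S ≤_h D_i` for some `i`. -/
inductive HLe {Q : Type} (le : Q → Q → Prop) : ITerm Q → ITerm Q → Prop where
  | const {p q : Q} : le p q → HLe le (.const p) (.const q)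
  | const_s_left {p : Q} {α : Ordinal.{0}} {V : ITerm Q} :
      HLe le (.const p) V → HLe le (.s α (.const p)) V
  | const_s_right {p : Q} {α : Ordinal.{0}} {U : ITerm Q} :
      HLe le U (.const p) → HLe le U (.s α (.const p))
  | s_eq {α : Ordinal.{0}} {U V : ITerm Q} :
      HLe le U V → HLe le (.s α U) (.s α V)
  | s_gt {α β : Ordinal.{0}} {U V : ITerm Q} : β < α →
      HLe le (.s α U) V → HLe le (.s α U) (.s β V)
  | s_lt {α β : Ordinal.{0}} {U V : ITerm Q} : α < β →
      HLe le U (.s β V) → HLe le (.s α U) (.s β V)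
  | dot_dot {A C : ITerm Q} {B D : ℕ → ITerm Q} :
      HLe le A C → (∀ n, HLe le (B n) (.dot C D)) →
      HLe le (.dot A B) (.dot C D)
  | dot_drop {A C : ITerm Q} {B D : ℕ → ITerm Q} {n : ℕ} :
      HLe le (.dot A B) (D n) → HLe le (.dot A B) (.dot C D)
  | sup_le {B : ℕ → ITerm Q} {T : ITerm Q} :
      (∀ n, HLe le (B n) T) → HLe le (.sup B) T
  | le_sup {D : ℕ → ITerm Q} {T : ITerm Q} {n : ℕ} :
      HLe le T (D n) → HLe le T (.sup D)
  | dot_sng {S A : ITerm Q} {B : ℕ → ITerm Q} : S.IsSng →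
      HLe le A S → (∀ n, HLe le (B n) S) → HLe le (.dot A B) S
  | sng_dot {S C : ITerm Q} {D : ℕ → ITerm Q} : S.IsSng →
      HLe le S C → HLe le S (.dot C D)
  | sng_dot_drop {S C : ITerm Q} {D : ℕ → ITerm Q} {n : ℕ} : S.IsSng →
      HLe le S (D n) → HLe le S (.dot C D)

/-- `s*_ξ = s_{α₀} ∘ ⋯ ∘ s_{α_m}` for the Cantor normal form
`ξ = ω^{α₀} + ⋯ + ω^{α_m}` (`α₀ ≥ ⋯ ≥ α_m`), given by the list `[α₀, …, α_m]`;
for `ξ = 0` (the empty list) it is the identity. -/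
def sStar {Q : Type} (L : List Ordinal.{0}) (T : ITerm Q) : ITerm Q :=
  L.foldr (fun α t => ITerm.s α t) T

/-- The retraction `r_α` on iterated `Q`-labeled forests. -/
noncomputable def rA {Q : Type} (α : Ordinal.{0}) : ITerm Q → ITerm Q
  | .const q => .const q
  | .s β T => if β < α then rA α T else if β = α then T else .s β T
  | .dot T V => .sup (fun n => match n with
      | 0 => rA α T
      | m + 1 => rA α (V m))
  | .sup F => .sup (fun n => rA α (F n))
  termination_by structural t => t

/-- `r*_ξ = r_{α_m} ∘ ⋯ ∘ r_{α₀}`. -/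
noncomputable def rStar {Q : Type} (L : List Ordinal.{0}) (T : ITerm Q) : ITerm Q :=
  L.foldl (fun t α => rA α t) T

theorem rA_s_of_lt {Q : Type} {α β : Ordinal.{0}} (h : β < α) (T : ITerm Q) :
    rA α (.s β T) = rA α T := by
  rw [rA, if_pos h]

theorem rA_s_self {Q : Type} (α : Ordinal.{0}) (T : ITerm Q) : rA α (.s α T) = T := by
  rw [rA, if_neg (lt_irrefl α), if_pos rfl]

theorem rA_s_of_gt {Q : Type} {α β : Ordinal.{0}} (h : α < β) (T : ITerm Q) :
    rA α (.s β T) = .s β T := by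
  rw [rA, if_neg h.not_gt, if_neg h.ne']

namespace HLe

variable {Q : Type} {le : Q → Q → Prop} {α β γ : Ordinal.{0}} {U V W T : ITerm Q}
  {F : ℕ → ITerm Q}

theorem le_rA_dot_of_le_head (h : HLe le U (rA α T)) : HLe le U (rA α (.dot T F)) := by
  rw [rA]
  exact le_sup (n := 0) h

theorem le_rA_dot_of_le_tail {n : ℕ} (h : HLe le U (rA α (F n))) :
    HLe le U (rA α (.dot T F)) := by
  rw [rA]
  exact le_sup (n := n + 1) h

theorem rA_dot_le (hT : HLe le (rA α T) W) (hF : ∀ n, HLe le (rA α (F n)) W) :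
    HLe le (rA α (.dot T F)) W := by
  rw [rA]
  exact sup_le fun | 0 => hT | n + 1 => hF n

theorem rA_const_s_left {p : Q} (h : HLe le (.const p) (rA α V)) :
    HLe le (rA α (.s β (.const p))) (rA α V) := by
  rcases lt_trichotomy β α with hβ | rfl | hβ
  · rwa [rA_s_of_lt hβ]
  · rwa [rA_s_self]
  · rw [rA_s_of_gt hβ]
    exact const_s_left h

theorem rA_const_s_right {p : Q} (h : HLe le (rA α U) (.const p)) :
    HLe le (rA α U) (rA α (.s β (.const p))) := by
  rcases lt_trichotomy β α with hβ | rfl | hβ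
  · rwa [rA_s_of_lt hβ]
  · rwa [rA_s_self]
  · rw [rA_s_of_gt hβ]
    exact const_s_right h

theorem rA_s_eq (h : HLe le U V) (ih : HLe le (rA α U) (rA α V)) :
    HLe le (rA α (.s β U)) (rA α (.s β V)) := by
  rcases lt_trichotomy β α with hβ | rfl | hβ
  · rwa [rA_s_of_lt hβ, rA_s_of_lt hβ]
  · rwa [rA_s_self, rA_s_self]
  · rw [rA_s_of_gt hβ, rA_s_of_gt hβ]
    exact s_eq h

theorem rA_s_gt (hβγ : β < γ) (h : HLe le (.s γ U) V) (ih : HLe le (rA α (.s γ U)) (rA α V)) :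
    HLe le (rA α (.s γ U)) (rA α (.s β V)) := by
  rcases lt_trichotomy β α with hβ | rfl | hβ
  · rwa [rA_s_of_lt hβ]
  · rwa [rA_s_self, rA_s_of_gt hβγ]
  · rw [rA_s_of_gt hβ, rA_s_of_gt (hβ.trans hβγ)]
    exact s_gt hβγ h

theorem rA_s_lt (hγβ : γ < β) (h : HLe le U (.s β V)) (ih : HLe le (rA α U) (rA α (.s β V))) :
    HLe le (rA α (.s γ U)) (rA α (.s β V)) := by
  rcases lt_trichotomy γ α with hγ | rfl | hγ
  · rwa [rA_s_of_lt hγ]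
  · rwa [rA_s_self, rA_s_of_gt hγβ]
  · rw [rA_s_of_gt hγ, rA_s_of_gt (hγ.trans hγβ)]
    exact s_lt hγβ h

end HLe

theorem rA_endomorphism_general {Q : Type} (le : Q → Q → Prop)
    (α : Ordinal.{0}) (T S : ITerm Q) (h : HLe le T S) :
    HLe le (rA α T) (rA α S) := by
  induction h with
  | const hpq => exact .const hpq
  | const_s_left _ ih => exact ih.rA_const_s_left
  | const_s_right _ ih => exact ih.rA_const_s_right
  | s_eq h ih => exact h.rA_s_eq ih
  | s_gt hlt h ih => exact h.rA_s_gt hlt ih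
  | s_lt hlt h ih => exact h.rA_s_lt hlt ih
  | dot_dot _ _ ihA ihB => exact .rA_dot_le (.le_rA_dot_of_le_head ihA) ihB
  | dot_drop _ ih => exact .le_rA_dot_of_le_tail ih
  | sup_le _ ih => exact .sup_le ih
  | le_sup _ ih => exact .le_sup ih
  | dot_sng _ _ _ ihA ihB => exact .rA_dot_le ihA ihB
  | sng_dot _ _ ih => exact .le_rA_dot_of_le_head ih
  | sng_dot_drop _ _ ih => exact .le_rA_dot_of_le_tail ih

/-- The retraction map `r_α` (defined by `r_α(q) = q`, `r_α(⊔_i F_i) = ⊔_i r_α(F_i)`,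
`r_α(T·V) = r_α(T) ⊔ r_α(V)`, and `r_α(s_β(T)) = r_α(T)` if `β < α`, `= T` if
`β = α`, `= s_β(T)` if `β > α`) is an endomorphism of the homomorphism
quasi-order: `T ≤_h S` implies `r_α(T) ≤_h r_α(S)`. -/
theorem rA_endomorphism {Q : Type} (le : Q → Q → Prop)
    (hrefl : ∀ q, le q q) (htrans : ∀ a b c, le a b → le b c → le a c)
    (α : Ordinal.{0}) (T S : ITerm Q) (h : HLe le T S) :
    HLe le (rA α T) (rA α S) :=
  rA_endomorphism_general le α T S h
end
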